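/- Let i ≥ 1 and j ≥ 0 be integers, and suppose there exist constants C > 0 and A > 0 such that |Σ_{n ≤ t} τ(n)^i − C·t·(log t)^{2^i − 1}| ≤ A·t·(log t)^{2^i − 2} for all real t ≥ 3. Then there exists a constant B > 0, depending only on i, j, C and A, such that for all real x ≥ 3 one has |Σ_{n ≤ x} τ(n)^i (log n)^j n^{−1/2} − 2C·√x·(log x)^{2^i + j − 1}| ≤ B·√x·(log x)^{2^i + j − 2}. -/

import Mathlib

/-!
Partial summation with the weight `f t = (log t)^j / √t`. Writing `S t = ∑_{n ≤ t} c n` and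
`S t = C t (log t)^p + E t`, Abel summation from a fixed base point `a` gives
`∑_{n ≤ x} c n f n = f x S x - ∫_a^x f' S + O(1)`, and `f x · C x (log x)^p = C √x (log x)^(p+j)`.
The main part of the integral is explicit: `f' t · t (log t)^p` is the derivative of
`-√t (log t)^(p+j)` plus `(p + 2j) (log t)^(p+j-1) / √t`, so `-C ∫_a^x f' t · t (log t)^p`
contributes a second `C √x (log x)^(p+j)`. Every other term is `O(√x (log x)^(p+j-1))`, because
`|f' t| ≤ (j + 1/2) (log t)^j / t^(3/2)` once `log t ≥ 1` and `∫_a^x (log t)^m / √t ≤ 2 √x (log x)^m`.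
-/

open Real Finset intervalIntegral MeasureTheory

lemma hasDerivAt_log_pow_div_sqrt (j : ℕ) {t : ℝ} (ht : 0 < t) :
    HasDerivAt (fun t => log t ^ j / √t)
      ((j * log t ^ (j - 1) - log t ^ j / 2) / (t * √t)) t := by
  have hs : √t ≠ 0 := (sqrt_pos.mpr ht).ne'
  refine (((hasDerivAt_log ht.ne').pow j).div (hasDerivAt_sqrt ht.ne') hs).congr_deriv ?_
  rw [sq_sqrt ht.le]
  simp only [Pi.pow_apply]
  field_simp
  rw [sq_sqrt ht.le]
  ring

lemma hasDerivAt_sqrt_mul_log_pow (m : ℕ) {t : ℝ} (ht : 0 < t) :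
    HasDerivAt (fun t => √t * log t ^ m) ((log t ^ m / 2 + m * log t ^ (m - 1)) / √t) t := by
  have hs : √t ≠ 0 := (sqrt_pos.mpr ht).ne'
  refine ((hasDerivAt_sqrt ht.ne').mul ((hasDerivAt_log ht.ne').pow m)).congr_deriv ?_
  simp only [Pi.pow_apply]
  field_simp
  rw [sq_sqrt ht.le]
  ring

lemma continuousOn_deriv_log_pow_div_sqrt (j : ℕ) :
    ContinuousOn (deriv fun t => log t ^ j / √t) (Set.Ioi 0) :=
  ContinuousOn.congr (by fun_prop (disch := intro t (ht : 0 < t); positivity))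
    fun _ ht => (hasDerivAt_log_pow_div_sqrt j ht).deriv

lemma intervalIntegrable_of_continuousOn_Ioi {g : ℝ → ℝ} (hg : ContinuousOn g (Set.Ioi 0))
    {a x : ℝ} (ha : 0 < a) (hax : a ≤ x) : IntervalIntegrable g volume a x :=
  (hg.mono fun _ ht => ha.trans_le (Set.uIcc_of_le hax ▸ ht).1).intervalIntegrable

lemma intervalIntegrable_log_pow_div_sqrt (m : ℕ) {a x : ℝ} (ha : 0 < a) (hax : a ≤ x) :
    IntervalIntegrable (fun t => log t ^ m / √t) volume a x :=
  intervalIntegrable_of_continuousOn_Ioi (by fun_prop (disch := intro t (ht : 0 < t); positivity))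
    ha hax

lemma integral_deriv_sqrt_mul_log_pow (m : ℕ) {a x : ℝ} (ha : 0 < a) (hax : a ≤ x) :
    ∫ t in a..x, (log t ^ m / 2 + m * log t ^ (m - 1)) / √t = √x * log x ^ m - √a * log a ^ m :=
  integral_eq_sub_of_hasDerivAt
    (fun _ ht => hasDerivAt_sqrt_mul_log_pow m (ha.trans_le (Set.uIcc_of_le hax ▸ ht).1))
    (intervalIntegrable_of_continuousOn_Ioi
      (by fun_prop (disch := intro t (ht : 0 < t); positivity)) ha hax)

lemma integral_log_pow_div_sqrt_nonneg (m : ℕ) {a x : ℝ} (ha : 1 ≤ a) (hax : a ≤ x) :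
    0 ≤ ∫ t in a..x, log t ^ m / √t :=
  integral_nonneg hax fun t ht => by
    have := log_nonneg (ha.trans ht.1)
    positivity

lemma integral_log_pow_div_sqrt_le (m : ℕ) {a x : ℝ} (ha : 1 ≤ a) (hax : a ≤ x) :
    ∫ t in a..x, log t ^ m / √t ≤ 2 * √x * log x ^ m := by
  have ha0 : 0 < a := one_pos.trans_le ha
  calc ∫ t in a..x, log t ^ m / √t
      ≤ ∫ t in a..x, 2 * ((log t ^ m / 2 + m * log t ^ (m - 1)) / √t) := by
        refine integral_mono_on hax (intervalIntegrable_log_pow_div_sqrt m ha0 hax)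
          ((intervalIntegrable_of_continuousOn_Ioi
            (by fun_prop (disch := intro t (ht : 0 < t); positivity)) ha0 hax).const_mul 2) ?_
        intro t ht
        have := log_nonneg (ha.trans ht.1)
        rw [mul_div_assoc', mul_add, mul_div_cancel₀ _ two_ne_zero]
        gcongr
        exact le_add_of_nonneg_right (by positivity)
    _ = 2 * (√x * log x ^ m - √a * log a ^ m) := by
        rw [intervalIntegral.integral_const_mul, integral_deriv_sqrt_mul_log_pow m ha0 hax]
    _ ≤ 2 * √x * log x ^ m := by
        have := mul_nonneg (sqrt_nonneg a) (pow_nonneg (log_nonneg ha) m)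
        linarith

lemma one_le_log_of_exp_one_le {t : ℝ} (ht : exp 1 ≤ t) : 1 ≤ log t :=
  (le_log_iff_exp_le ((exp_pos 1).trans_le ht)).mpr ht

lemma abs_deriv_log_pow_div_sqrt_le (j : ℕ) {t : ℝ} (ht : exp 1 ≤ t) :
    |deriv (fun t => log t ^ j / √t) t| ≤ (j + 1 / 2) * log t ^ j / (t * √t) := by
  have ht0 : 0 < t := (exp_pos 1).trans_le ht
  have hlog : 1 ≤ log t := one_le_log_of_exp_one_le ht
  rw [(hasDerivAt_log_pow_div_sqrt j ht0).deriv, abs_div,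
    abs_of_pos (mul_pos ht0 (sqrt_pos.mpr ht0))]
  refine div_le_div_of_nonneg_right ?_ (by positivity)
  have hlog0 : 0 ≤ log t := zero_le_one.trans hlog
  calc |j * log t ^ (j - 1) - log t ^ j / 2|
      ≤ j * log t ^ (j - 1) + log t ^ j / 2 := by
        have := pow_nonneg hlog0 j
        have := mul_nonneg j.cast_nonneg (pow_nonneg hlog0 (j - 1))
        exact abs_le.mpr ⟨by linarith, by linarith⟩
    _ ≤ j * log t ^ j + log t ^ j / 2 := by
        gcongr
        exact Nat.sub_le j 1
    _ = (j + 1 / 2) * log t ^ j := by ring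

lemma integral_deriv_log_pow_div_sqrt_mul_mul_log_pow (j : ℕ) {p : ℕ} (hp : 1 ≤ p) {a x : ℝ}
    (ha : 0 < a) (hax : a ≤ x) :
    ∫ t in a..x, deriv (fun t => log t ^ j / √t) t * (t * log t ^ p) =
      √a * log a ^ (p + j) - √x * log x ^ (p + j) +
        (p + 2 * j) * ∫ t in a..x, log t ^ (p + j - 1) / √t := by
  have key : ∀ t ∈ Set.uIcc a x, deriv (fun t => log t ^ j / √t) t * (t * log t ^ p) =
      (p + 2 * j) * (log t ^ (p + j - 1) / √t) -
        (log t ^ (p + j) / 2 + ((p + j : ℕ) : ℝ) * log t ^ (p + j - 1)) / √t := by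
    intro t ht
    have ht0 : 0 < t := ha.trans_le (Set.uIcc_of_le hax ▸ ht).1
    have hs : √t ≠ 0 := (sqrt_pos.mpr ht0).ne'
    rw [(hasDerivAt_log_pow_div_sqrt j ht0).deriv]
    rcases j with _ | k
    · field_simp
      push_cast
      ring
    · obtain ⟨q, rfl⟩ := Nat.exists_eq_add_of_le' hp
      field_simp
      rw [show q + 1 + (k + 1) - 1 = k + (q + 1) by omega, show k + 1 - 1 = k by omega]
      push_cast
      ring
  rw [integral_congr key, intervalIntegral.integral_sub, intervalIntegral.integral_const_mul,
    integral_deriv_sqrt_mul_log_pow _ ha hax]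
  · ring
  · exact (intervalIntegrable_log_pow_div_sqrt _ ha hax).const_mul _
  · exact intervalIntegrable_of_continuousOn_Ioi
      (by fun_prop (disch := intro t (ht : 0 < t); positivity)) ha hax

lemma abs_integral_deriv_log_pow_div_sqrt_mul_le (j : ℕ) {p : ℕ} (hp : 1 ≤ p) {E : ℝ → ℝ}
    {A a x : ℝ} (ha : exp 1 ≤ a) (hax : a ≤ x)
    (hE : ∀ t ∈ Set.Icc a x, |E t| ≤ A * t * log t ^ (p - 1)) :
    |∫ t in a..x, deriv (fun t => log t ^ j / √t) t * E t| ≤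
      (2 * j + 1) * A * √x * log x ^ (p + j - 1) := by
  have ha0 : 0 < a := (exp_pos 1).trans_le ha
  have ha1 : 1 ≤ a := (one_le_exp zero_le_one).trans ha
  have hA : 0 ≤ A := by
    have h := (abs_nonneg _).trans (hE a ⟨le_rfl, hax⟩)
    have := pow_pos (one_pos.trans_le (one_le_log_of_exp_one_le ha)) (p - 1)
    exact nonneg_of_mul_nonneg_left (by simpa only [mul_assoc] using h) (by positivity)
  have hpt : ∀ t ∈ Set.Ioc a x, ‖deriv (fun t => log t ^ j / √t) t * E t‖ ≤
      (j + 1 / 2) * A * (log t ^ (p + j - 1) / √t) := by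
    intro t ht
    have ht0 : 0 < t := ha0.trans ht.1
    have hs : √t ≠ 0 := (sqrt_pos.mpr ht0).ne'
    rw [norm_mul, norm_eq_abs, norm_eq_abs]
    calc |deriv (fun t => log t ^ j / √t) t| * |E t|
        ≤ (j + 1 / 2) * log t ^ j / (t * √t) * (A * t * log t ^ (p - 1)) :=
          mul_le_mul (abs_deriv_log_pow_div_sqrt_le j (ha.trans ht.1.le))
            (hE t (Set.Ioc_subset_Icc_self ht)) (abs_nonneg _)
            (by have := one_le_log_of_exp_one_le (ha.trans ht.1.le); positivity)
      _ = (j + 1 / 2) * A * (log t ^ (p + j - 1) / √t) := by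
          rw [show p + j - 1 = j + (p - 1) by omega, pow_add]
          field_simp
  calc |∫ t in a..x, deriv (fun t => log t ^ j / √t) t * E t|
      ≤ ∫ t in a..x, (j + 1 / 2) * A * (log t ^ (p + j - 1) / √t) :=
        norm_integral_le_of_norm_le hax (Filter.Eventually.of_forall hpt)
          ((intervalIntegrable_log_pow_div_sqrt _ ha0 hax).const_mul _)
    _ ≤ (j + 1 / 2) * A * (2 * √x * log x ^ (p + j - 1)) := by
        rw [intervalIntegral.integral_const_mul]
        gcongr
        exact integral_log_pow_div_sqrt_le _ ha1 hax
    _ = (2 * j + 1) * A * √x * log x ^ (p + j - 1) := by ring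

lemma sum_Icc_zero_eq_sum_Icc_one {M : Type*} [AddCommMonoid M] {c : ℕ → M} (hc0 : c 0 = 0)
    (n : ℕ) : ∑ k ∈ Icc 0 n, c k = ∑ k ∈ Icc 1 n, c k := by
  rw [Icc_eq_cons_Ioc (Nat.zero_le n), sum_cons, hc0, zero_add, ← Icc_add_one_left_eq_Ioc,
    zero_add]

lemma sum_Icc_one_mul_eq_sub_sub_integral_mul (c : ℕ → ℝ) (hc0 : c 0 = 0) {f : ℝ → ℝ}
    {a x : ℝ} (ha : 0 ≤ a) (hax : a ≤ x)
    (hf_diff : ∀ t ∈ Set.Icc a x, DifferentiableAt ℝ f t)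
    (hf_int : IntegrableOn (deriv f) (Set.Icc a x)) :
    ∑ n ∈ Icc 1 ⌊x⌋₊, f n * c n =
      ∑ n ∈ Icc 1 ⌊a⌋₊, f n * c n + f x * ∑ n ∈ Icc 1 ⌊x⌋₊, c n -
        f a * ∑ n ∈ Icc 1 ⌊a⌋₊, c n - ∫ t in a..x, deriv f t * ∑ n ∈ Icc 1 ⌊t⌋₊, c n := by
  have abel := sum_mul_eq_sub_sub_integral_mul c ha hax hf_diff hf_int
  simp only [sum_Icc_zero_eq_sum_Icc_one hc0, ← integral_of_le hax] at abel
  have hIcc : ∀ n, Icc 1 n = Ioc 0 n := Icc_add_one_left_eq_Ioc 0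
  rw [add_sub_assoc, add_sub_assoc, ← abel, hIcc, hIcc]
  exact (sum_Ioc_consecutive _ (Nat.zero_le _) (Nat.floor_le_floor hax)).symm

lemma abs_log_pow_div_sqrt_mul_sub_le (j : ℕ) {p : ℕ} (hp : 1 ≤ p) {s C A x : ℝ} (hx : 1 ≤ x)
    (hs : |s - C * x * log x ^ p| ≤ A * x * log x ^ (p - 1)) :
    |log x ^ j / √x * s - C * √x * log x ^ (p + j)| ≤ A * √x * log x ^ (p + j - 1) := by
  have hx0 : 0 < x := one_pos.trans_le hx
  have hsx : 0 < √x := sqrt_pos.mpr hx0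
  have hf : 0 ≤ log x ^ j / √x := by have := log_nonneg hx; positivity
  calc |log x ^ j / √x * s - C * √x * log x ^ (p + j)|
      = log x ^ j / √x * |s - C * x * log x ^ p| := by
        rw [← abs_of_nonneg hf, ← abs_mul, abs_of_nonneg hf]
        congr 1
        field_simp
        rw [pow_add, sq_sqrt hx0.le]
        ring
    _ ≤ log x ^ j / √x * (A * x * log x ^ (p - 1)) := mul_le_mul_of_nonneg_left hs hf
    _ = A * √x * log x ^ (p + j - 1) := by
        rw [show p + j - 1 = (p - 1) + j by omega, pow_add]
        field_simp
        rw [sq_sqrt hx0.le]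
        ring

theorem exists_abs_sum_mul_log_pow_div_sqrt_sub_le (c : ℕ → ℝ) (hc0 : c 0 = 0) (j : ℕ) {p : ℕ}
    (hp : 1 ≤ p) {C A a : ℝ} (ha : exp 1 ≤ a)
    (h : ∀ t, a ≤ t → |∑ n ∈ Icc 1 ⌊t⌋₊, c n - C * t * log t ^ p| ≤ A * t * log t ^ (p - 1)) :
    ∃ B, ∀ x, a ≤ x → |∑ n ∈ Icc 1 ⌊x⌋₊, c n * log n ^ j / √n - 2 * C * √x * log x ^ (p + j)| ≤
      B * √x * log x ^ (p + j - 1) := by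
  set f : ℝ → ℝ := fun t => log t ^ j / √t
  set S : ℝ → ℝ := fun t => ∑ n ∈ Icc 1 ⌊t⌋₊, c n
  have ha0 : 0 < a := (exp_pos 1).trans_le ha
  have ha1 : 1 ≤ a := (one_le_exp zero_le_one).trans ha
  set K := ∑ n ∈ Icc 1 ⌊a⌋₊, f n * c n - f a * S a - C * √a * log a ^ (p + j)
  refine ⟨|K| + 2 * (j + 1) * A + 2 * |C| * (p + 2 * j), fun x hax => ?_⟩
  have hx1 : 1 ≤ x := ha1.trans hax
  have hf' : ContinuousOn (deriv f) (Set.Icc a x) :=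
    (continuousOn_deriv_log_pow_div_sqrt j).mono fun t ht => ha0.trans_le ht.1
  have habel : ∑ n ∈ Icc 1 ⌊x⌋₊, c n * log n ^ j / √n =
      ∑ n ∈ Icc 1 ⌊a⌋₊, f n * c n + f x * S x - f a * S a - ∫ t in a..x, deriv f t * S t := by
    rw [← sum_Icc_one_mul_eq_sub_sub_integral_mul c hc0 ha0.le hax
      (fun t ht => (hasDerivAt_log_pow_div_sqrt j (ha0.trans_le ht.1)).differentiableAt)
      hf'.integrableOn_Icc]
    exact sum_congr rfl fun n _ => by ring
  have hsplit : ∫ t in a..x, deriv f t * S t =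
      (∫ t in a..x, deriv f t * (S t - C * t * log t ^ p)) +
        C * ∫ t in a..x, deriv f t * (t * log t ^ p) := by
    have hS : IntervalIntegrable (fun t => deriv f t * S t) volume a x :=
      (intervalIntegrable_iff_integrableOn_Icc_of_le hax).mpr
        (integrableOn_mul_sum_Icc c ha0.le hf'.integrableOn_Icc)
    have hM : IntervalIntegrable (fun t => C * (deriv f t * (t * log t ^ p))) volume a x :=
      (intervalIntegrable_of_continuousOn_Ioi ((continuousOn_deriv_log_pow_div_sqrt j).mul
        (by fun_prop (disch := intro t (ht : 0 < t); positivity))) ha0 hax).const_mul C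
    rw [← sub_eq_iff_eq_add, ← intervalIntegral.integral_const_mul,
      ← intervalIntegral.integral_sub hS hM]
    exact integral_congr fun t _ => by ring
  have hmain := integral_deriv_log_pow_div_sqrt_mul_mul_log_pow j hp ha0 hax
  have herr := abs_integral_deriv_log_pow_div_sqrt_mul_le j hp ha hax
    (E := fun t => S t - C * t * log t ^ p) fun t ht => h t ht.1
  have hfx := abs_log_pow_div_sqrt_mul_sub_le j hp hx1 (h x hax)
  set J := ∫ t in a..x, log t ^ (p + j - 1) / √t
  have hJ : |C * (p + 2 * j) * J| ≤ 2 * |C| * (p + 2 * j) * (√x * log x ^ (p + j - 1)) := by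
    rw [abs_mul, abs_mul, abs_of_nonneg (by positivity : (0:ℝ) ≤ p + 2 * j),
      abs_of_nonneg (integral_log_pow_div_sqrt_nonneg _ ha1 hax)]
    calc |C| * (p + 2 * j) * J ≤ |C| * (p + 2 * j) * (2 * √x * log x ^ (p + j - 1)) := by
          gcongr
          exact integral_log_pow_div_sqrt_le _ ha1 hax
      _ = 2 * |C| * (p + 2 * j) * (√x * log x ^ (p + j - 1)) := by ring
  have hK : |K| ≤ |K| * (√x * log x ^ (p + j - 1)) :=
    le_mul_of_one_le_right (abs_nonneg K) <| one_le_mul_of_one_le_of_one_le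
      (one_le_sqrt.mpr hx1) (one_le_pow₀ (one_le_log_of_exp_one_le (ha.trans hax)))
  set u := f x * S x - C * √x * log x ^ (p + j)
  set v := ∫ t in a..x, deriv f t * (S t - C * t * log t ^ p)
  set w := C * (p + 2 * j) * J
  rw [show ∑ n ∈ Icc 1 ⌊x⌋₊, c n * log n ^ j / √n - 2 * C * √x * log x ^ (p + j) =
      K + u - v - w by rw [habel, hsplit, hmain]; ring]
  linarith [abs_sub (K + u - v) w, abs_sub (K + u) v, abs_add_le K u]

theorem stmt_1 (i j : ℕ) (hi : 1 ≤ i) (C A : ℝ)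
    (h : ∀ t : ℝ, 3 ≤ t →
      |(∑ n ∈ Finset.Icc 1 ⌊t⌋₊, ((n.divisors.card : ℝ)) ^ i)
          - C * t * Real.log t ^ (2 ^ i - 1)| ≤ A * t * Real.log t ^ (2 ^ i - 2)) :
    ∃ B : ℝ, 0 < B ∧ ∀ x : ℝ, 3 ≤ x →
      |(∑ n ∈ Finset.Icc 1 ⌊x⌋₊, ((n.divisors.card : ℝ)) ^ i * Real.log n ^ j / Real.sqrt n)
          - 2 * C * Real.sqrt x * Real.log x ^ (2 ^ i + j - 1)|
        ≤ B * Real.sqrt x * Real.log x ^ (2 ^ i + j - 2) := by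
  have h2i : 2 ≤ 2 ^ i := Nat.one_lt_two_pow (by omega)
  have hc0 : ((Nat.divisors 0).card : ℝ) ^ i = 0 := by simp [zero_pow (by omega : i ≠ 0)]
  obtain ⟨B, hB⟩ := exists_abs_sum_mul_log_pow_div_sqrt_sub_le _ hc0 j (p := 2 ^ i - 1) (a := 3)
    (by omega) (by linarith [exp_one_lt_d9])
    fun t ht => by simpa only [show 2 ^ i - 1 - 1 = 2 ^ i - 2 by omega] using h t ht
  refine ⟨max B 1, by positivity, fun x hx => ?_⟩
  rw [show 2 ^ i + j - 1 = 2 ^ i - 1 + j by omega, show 2 ^ i + j - 2 = 2 ^ i - 1 + j - 1 by omega]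
  have := log_nonneg (by linarith : (1 : ℝ) ≤ x)
  exact (hB x hx).trans (by gcongr; exact le_max_left B 1)
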